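/- arXiv:1204.0271 — 3 statements merged into one kernel-verified Lean document; each statement's English description precedes it below -/
import Mathlib

section
/- Let D⁺, D⁻ > 0, λ ∈ (0,1), α(λ) = λ√D⁻/(λ√D⁻+(1-λ)√D⁺). If λ = D⁺/(D⁺+D⁻) (the mass-conservative interface condition) and D⁺ > D⁻, then α(λ) > 1/2; i.e., under continuity of flux, the expected residence time is longer on the side with the larger dispersion coefficient. -/
/-!
Writing `D⁺ = a²`, `D⁻ = b²`, the mass-conservative choice `λ = a² / (a² + b²)` makes
`α(λ) = a / (a + b)`, the share of `√D⁺` in `√D⁺ + √D⁻`; this exceeds `1/2` exactly when `a > b`.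
-/

open Real

theorem div_sq_add_sq_weight_eq {a b : ℝ} (ha : 0 < a) (hb : 0 < b) :
    a ^ 2 / (a ^ 2 + b ^ 2) * b /
      (a ^ 2 / (a ^ 2 + b ^ 2) * b + (1 - a ^ 2 / (a ^ 2 + b ^ 2)) * a) = a / (a + b) := by
  have hden : a ^ 2 / (a ^ 2 + b ^ 2) * b + (1 - a ^ 2 / (a ^ 2 + b ^ 2)) * a =
      a * b * (a + b) / (a ^ 2 + b ^ 2) := by
    field_simp
    ring
  rw [hden]
  field_simp

theorem one_half_lt_div_add_iff {a b : ℝ} (hab : 0 < a + b) : 1 / 2 < a / (a + b) ↔ b < a := by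
  rw [lt_div_iff₀ hab]
  constructor <;> intro h <;> linarith

/-- Under the mass-conservative interface condition
`λ = D⁺/(D⁺+D⁻)`, if `D⁺ > D⁻` then `α(λ) > 1/2`. -/
theorem stmt_5 (Dp Dm lam : ℝ) (hDp : 0 < Dp) (hDm : 0 < Dm)
    (alpha : ℝ)
    (halpha : alpha = lam * Real.sqrt Dm /
      (lam * Real.sqrt Dm + (1 - lam) * Real.sqrt Dp))
    (hlam : lam = Dp / (Dp + Dm)) (hD : Dm < Dp) :
    1/2 < alpha := by
  have hp : 0 < √Dp := sqrt_pos.mpr hDp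
  have hm : 0 < √Dm := sqrt_pos.mpr hDm
  have halpha_eq : alpha = √Dp / (√Dp + √Dm) := by
    rw [halpha, hlam, ← sq_sqrt hDp.le, ← sq_sqrt hDm.le, sqrt_sq hp.le, sqrt_sq hm.le]
    exact div_sq_add_sq_weight_eq hp hm
  rw [halpha_eq, one_half_lt_div_add_iff (by positivity)]
  exact sqrt_lt_sqrt hDm.le hD
end

section
/- Let α ∈ (0,1) and let f : ℝ → ℝ be continuous, twice continuously differentiable on ℝ∖{0}, with one-sided derivatives f'(0⁺) and f'(0⁻) at 0. Given reals ℓ⁺ = 2α·ℓ and ℓ⁻ = 2(1-α)·ℓ for some ℓ ≥ 0 and D⁺, D⁻ > 0, the quantity [(α√D⁺ - (1-α)√D⁻)/(2α)]·f'(0⁻)·ℓ⁺_B + (√D⁺/2)·(f'(0⁺) - f'(0⁻))·ℓ⁺_B vanishes for all ℓ⁺_B ≥ 0 and all f with λf'(0⁺) = (1-λ)f'(0⁻) if and only if α = λ√D⁻/(λ√D⁻+(1-λ)√D⁺). -/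
open Set

/-!
Multiplying the drift coefficient by `2αλ` and eliminating `f'(0⁺)` through the gluing
condition `λ f'(0⁺) = (1-λ) f'(0⁻)` leaves `f'(0⁻) · (α(λ√D⁻ + (1-λ)√D⁺) - λ√D⁻)`.
So the drift vanishes for every admissible `f` exactly when the second factor does; the kink
`(1-λ) max x 0 + λ min x 0`, with `f'(0⁻) = λ ≠ 0`, shows that this is necessary.
-/

def kink (p m : ℝ) (x : ℝ) : ℝ := p * max x 0 + m * min x 0

lemma kink_eqOn_Ioi (p m : ℝ) : EqOn (kink p m) (fun x => p * x) (Ioi 0) := fun x hx => by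
  simp [kink, max_eq_left (mem_Ioi.1 hx).le, min_eq_right (mem_Ioi.1 hx).le]

lemma kink_eqOn_Iio (p m : ℝ) : EqOn (kink p m) (fun x => m * x) (Iio 0) := fun x hx => by
  simp [kink, max_eq_right (mem_Iio.1 hx).le, min_eq_left (mem_Iio.1 hx).le]

lemma continuous_kink (p m : ℝ) : Continuous (kink p m) := by
  unfold kink
  fun_prop

lemma contDiffOn_kink (p m : ℝ) (n : WithTop ℕ∞) : ContDiffOn ℝ n (kink p m) {0}ᶜ := by
  intro x hx
  rcases (show x ≠ 0 from hx).lt_or_gt with hneg | hpos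
  · exact ((contDiff_const.mul contDiff_id).contDiffAt.congr_of_eventuallyEq
      ((kink_eqOn_Iio p m).eventuallyEq_of_mem (Iio_mem_nhds hneg))).contDiffWithinAt
  · exact ((contDiff_const.mul contDiff_id).contDiffAt.congr_of_eventuallyEq
      ((kink_eqOn_Ioi p m).eventuallyEq_of_mem (Ioi_mem_nhds hpos))).contDiffWithinAt

lemma hasDerivWithinAt_kink_Ioi (p m : ℝ) : HasDerivWithinAt (kink p m) p (Ioi 0) 0 := by
  simpa using ((hasDerivAt_id (0 : ℝ)).const_mul p).hasDerivWithinAt.congr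
    (kink_eqOn_Ioi p m) (by simp [kink])

lemma hasDerivWithinAt_kink_Iio (p m : ℝ) : HasDerivWithinAt (kink p m) m (Iio 0) 0 := by
  simpa using ((hasDerivAt_id (0 : ℝ)).const_mul m).hasDerivWithinAt.congr
    (kink_eqOn_Iio p m) (by simp [kink])

/-- The coefficient of the local time `ℓ⁺_B`, with `sp = √D⁺`, `sm = √D⁻`, `dp = f'(0⁺)`,
`dm = f'(0⁻)`. -/
noncomputable def localTimeDrift (a sp sm dp dm : ℝ) : ℝ :=
  ((a * sp - (1 - a) * sm) / (2 * a)) * dm + (sp / 2) * (dp - dm)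

lemma localTimeDrift_eq_zero_iff {a lam sp sm dp dm : ℝ} (ha : a ≠ 0) (hlam : lam ≠ 0)
    (hrel : lam * dp = (1 - lam) * dm) :
    localTimeDrift a sp sm dp dm = 0 ↔ dm = 0 ∨ a * (lam * sm + (1 - lam) * sp) = lam * sm := by
  have hfactor : 2 * a * lam * localTimeDrift a sp sm dp dm
      = dm * (a * (lam * sm + (1 - lam) * sp) - lam * sm) := by
    unfold localTimeDrift
    field_simp
    linear_combination (a * sp) * hrel
  rw [← mul_eq_zero_iff_left (mul_ne_zero (mul_ne_zero two_ne_zero ha) hlam), hfactor,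
    mul_eq_zero, sub_eq_zero]

theorem stmt_11_general (Dp Dm lam a : ℝ) (hDm : 0 < Dm)
    (hlam : lam ∈ Set.Ioo (0:ℝ) 1) (ha : a ∈ Set.Ioo (0:ℝ) 1) :
    (∀ (f : ℝ → ℝ) (dp dm : ℝ), Continuous f →
        ContDiffOn ℝ 2 f ({0}ᶜ : Set ℝ) →
        HasDerivWithinAt f dp (Ioi 0) 0 →
        HasDerivWithinAt f dm (Iio 0) 0 →
        lam * dp = (1 - lam) * dm →
        ∀ ℓ : ℝ, 0 ≤ ℓ →
          ((a * Real.sqrt Dp - (1 - a) * Real.sqrt Dm) / (2 * a)) * dm * ℓ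
            + (Real.sqrt Dp / 2) * (dp - dm) * ℓ = 0) ↔
      a = lam * Real.sqrt Dm /
        (lam * Real.sqrt Dm + (1 - lam) * Real.sqrt Dp) := by
  obtain ⟨hlam0, hlam1⟩ := hlam
  have hden : lam * Real.sqrt Dm + (1 - lam) * Real.sqrt Dp ≠ 0 :=
    (add_pos_of_pos_of_nonneg (mul_pos hlam0 (Real.sqrt_pos.2 hDm))
      (mul_nonneg (sub_nonneg.2 hlam1.le) (Real.sqrt_nonneg _))).ne'
  rw [eq_div_iff hden]
  have hdrift := fun {dp dm : ℝ} => localTimeDrift_eq_zero_iff (sp := Real.sqrt Dp)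
    (sm := Real.sqrt Dm) (dp := dp) (dm := dm) ha.1.ne' hlam0.ne'
  constructor
  · intro H
    have hkink := H (kink (1 - lam) lam) (1 - lam) lam (continuous_kink _ _)
      (contDiffOn_kink _ _ _) (hasDerivWithinAt_kink_Ioi _ _) (hasDerivWithinAt_kink_Iio _ _)
      (mul_comm _ _) 1 zero_le_one
    rw [mul_one, mul_one] at hkink
    exact ((hdrift (mul_comm _ _)).1 hkink).resolve_left hlam0.ne'
  · intro h f dp dm _ _ _ _ hrel ℓ _
    calc _ = localTimeDrift a (Real.sqrt Dp) (Real.sqrt Dm) dp dm * ℓ := by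
          unfold localTimeDrift; ring
      _ = 0 := by rw [(hdrift hrel).2 (Or.inr h), zero_mul]

/-- The local-time terms arising from the Itô–Tanaka formula,
`[(α√D⁺ - (1-α)√D⁻)/(2α)]·f'(0⁻)·ℓ + (√D⁺/2)·(f'(0⁺) - f'(0⁻))·ℓ`,
vanish for all `ℓ ≥ 0` and all `f` continuous, `C²` off `0`, with one-sided
derivatives `f'(0⁺), f'(0⁻)` satisfying `λf'(0⁺) = (1-λ)f'(0⁻)`, if and only
if `α = λ√D⁻/(λ√D⁻+(1-λ)√D⁺)`. -/
theorem stmt_11 (Dp Dm lam a : ℝ) (hDp : 0 < Dp) (hDm : 0 < Dm)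
    (hlam : lam ∈ Set.Ioo (0:ℝ) 1) (ha : a ∈ Set.Ioo (0:ℝ) 1) :
    (∀ (f : ℝ → ℝ) (dp dm : ℝ), Continuous f →
        ContDiffOn ℝ 2 f ({0}ᶜ : Set ℝ) →
        HasDerivWithinAt f dp (Ioi 0) 0 →
        HasDerivWithinAt f dm (Iio 0) 0 →
        lam * dp = (1 - lam) * dm →
        ∀ ℓ : ℝ, 0 ≤ ℓ →
          ((a * Real.sqrt Dp - (1 - a) * Real.sqrt Dm) / (2 * a)) * dm * ℓ
            + (Real.sqrt Dp / 2) * (dp - dm) * ℓ = 0) ↔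
      a = lam * Real.sqrt Dm /
        (lam * Real.sqrt Dm + (1 - lam) * Real.sqrt Dp) :=
  stmt_11_general Dp Dm lam a hDm hlam ha
end

section
/- Let α ∈ (0,1) and consider the skew random walk on ℤ started at 0. For integers a, b > 0, the probability that the walk reaches b before -a equals α·a / (α·a + (1-α)·b). -/
/-- For the skew random walk started at `0` (from `k ≠ 0` it
moves to `k±1` with probability `1/2` each; from `0` to `+1` with
probability `α` and to `-1` with probability `1-α`), the probability
`u(0)` of reaching `b` before `-a` equals `α·a/(α·a + (1-α)·b)`.
The hitting probability `u` is characterized as the (unique) solution of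
the associated discrete Dirichlet problem on `[-a, b]`. -/
theorem stmt_17 (α : ℝ) (hα : α ∈ Set.Ioo (0:ℝ) 1)
    (a b : ℤ) (ha : 0 < a) (hb : 0 < b)
    (u : ℤ → ℝ)
    (hub : u b = 1) (hua : u (-a) = 0)
    (hharm : ∀ k : ℤ, -a < k → k < b → k ≠ 0 →
      u k = (1/2) * u (k + 1) + (1/2) * u (k - 1))
    (h0 : u 0 = α * u 1 + (1 - α) * u (-1)) :
    u 0 = α * (a : ℝ) / (α * (a : ℝ) + (1 - α) * (b : ℝ)) := by
  obtain ⟨hα0, hα1⟩ := hα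
  set c : ℝ := u 1 - u 0 with hc
  set d : ℝ := u 0 - u (-1) with hd
  have A : ∀ n : ℕ, (n : ℤ) ≤ b → u (n : ℤ) = u 0 + (n : ℝ) * c := by
    intro n
    induction n using Nat.strong_induction_on with
    | _ n ih =>
      match n with
      | 0 => intro _; simp
      | 1 => intro _; push_cast; rw [hc]; ring
      | (n+2) =>
        intro hle
        have h1 := ih (n+1) (by omega) (by push_cast at hle ⊢; omega)
        have h2 := ih n (by omega) (by push_cast at hle ⊢; omega)
        have hh := hharm ((n : ℤ) + 1) (by omega)
          (by push_cast at hle ⊢; omega) (by omega)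
        have e1 : ((n : ℤ) + 1 - 1) = (n : ℤ) := by ring
        have e2 : ((n : ℤ) + 1 + 1) = (((n + 2 : ℕ) : ℤ)) := by push_cast; ring
        have e3 : ((n : ℤ) + 1) = (((n + 1 : ℕ) : ℤ)) := by push_cast; ring
        rw [e1, e2, e3] at hh
        rw [h1, h2] at hh
        push_cast at hh ⊢
        linear_combination (-2:ℝ) * hh
  have B : ∀ n : ℕ, (n : ℤ) ≤ a → u (-(n : ℤ)) = u 0 - (n : ℝ) * d := by
    intro n
    induction n using Nat.strong_induction_on with
    | _ n ih =>
      match n with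
      | 0 => intro _; simp
      | 1 => intro _; push_cast; rw [hd]; ring
      | (n+2) =>
        intro hle
        have h1 := ih (n+1) (by omega) (by push_cast at hle ⊢; omega)
        have h2 := ih n (by omega) (by push_cast at hle ⊢; omega)
        have hh := hharm (-((n : ℤ) + 1)) (by push_cast at hle ⊢; omega)
          (by omega) (by omega)
        have e1 : (-((n : ℤ) + 1) + 1) = -(n : ℤ) := by ring
        have e2 : (-((n : ℤ) + 1) - 1) = -(((n + 2 : ℕ) : ℤ)) := by push_cast; ring
        have e3 : (-((n : ℤ) + 1)) = -(((n + 1 : ℕ) : ℤ)) := by push_cast; ring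
        rw [e1, e2, e3] at hh
        rw [h1, h2] at hh
        push_cast at hh ⊢
        linear_combination (-2:ℝ) * hh
  have hAb : (1:ℝ) = u 0 + (b : ℝ) * c := by
    have h := A b.toNat (by omega)
    rw [Int.toNat_of_nonneg hb.le] at h
    rw [hub] at h
    have e : ((b.toNat : ℕ) : ℝ) = (b : ℝ) := by
      rw [← Int.cast_natCast, Int.toNat_of_nonneg hb.le]
    rw [e] at h
    exact h
  have hBa : (0:ℝ) = u 0 - (a : ℝ) * d := by
    have h := B a.toNat (by omega)
    rw [Int.toNat_of_nonneg ha.le] at h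
    rw [hua] at h
    have e : ((a.toNat : ℕ) : ℝ) = (a : ℝ) := by
      rw [← Int.cast_natCast, Int.toNat_of_nonneg ha.le]
    rw [e] at h
    exact h
  have key : α * c = (1 - α) * d := by
    linear_combination α * hc - (1 - α) * hd - h0
  have hapos : (0:ℝ) < (a : ℝ) := by exact_mod_cast ha
  have hbpos : (0:ℝ) < (b : ℝ) := by exact_mod_cast hb
  have hD : (0:ℝ) < α * (a : ℝ) + (1 - α) * (b : ℝ) := by
    have : 0 < α * (a : ℝ) := by positivity
    have h2 : 0 < (1 - α) * (b : ℝ) := mul_pos (by linarith) hbpos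
    linarith
  rw [eq_div_iff hD.ne']
  linear_combination (-(α * (a:ℝ))) * hAb + (-((1 - α) * (b:ℝ))) * hBa + ((a:ℝ) * (b:ℝ)) * key + 2*(a:ℝ)*(b:ℝ)*h0
end
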